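/- arXiv:1503.07865 — 5 statements merged into one kernel-verified Lean document; each statement's English description precedes it below -/
import Mathlib

section
/- Let E : M_d(ℂ) → M_d(ℂ) be a hermiticity-preserving linear map. Then Tr[S · (E⊗E)(S)] = ∑_{k,l=1}^{d²} |Tr(A_k† E(A_l))|², i.e., it equals the squared Frobenius norm of the Liouville representation 𝓔 of E. -/
open Matrix Kronecker ComplexOrder MeasureTheory

/-- `d×d` complex matrices. -/
abbrev Mat (d : ℕ) := Matrix (Fin d) (Fin d) ℂ

/-- Matrices on `ℂ^d ⊗ ℂ^d`. -/
abbrev Mat2 (d : ℕ) := Matrix (Fin d × Fin d) (Fin d × Fin d) ℂ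

noncomputable instance matMeasurableSpace {m n : Type*} : MeasurableSpace (Matrix m n ℂ) :=
  borel _

variable {d : ℕ}

/-- Liouville representation of a linear map in the basis `A`:
`𝓔_{kl} = Tr((A k)† E (A l))`. -/
noncomputable def Liou (A : Fin (d ^ 2) → Mat d) (E : Mat d →ₗ[ℂ] Mat d) :
    Matrix (Fin (d ^ 2)) (Fin (d ^ 2)) ℂ :=
  Matrix.of fun k l => Matrix.trace ((A k)ᴴ * E (A l))

/-- The unitarity `u(E) = Tr(𝓔ᵤ† 𝓔ᵤ)/(d²-1)`, where `𝓔ᵤ` is the lower-right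
`(d²-1)×(d²-1)` (unital) block of the Liouville representation. -/
noncomputable def unitarity (A : Fin (d ^ 2) → Mat d) (E : Mat d →ₗ[ℂ] Mat d) : ℝ :=
  (∑ k ∈ Finset.univ.filter (fun k : Fin (d ^ 2) => (k : ℕ) ≠ 0),
    ∑ l ∈ Finset.univ.filter (fun l : Fin (d ^ 2) => (l : ℕ) ≠ 0),
      ‖Liou A E k l‖ ^ 2) / ((d : ℝ) ^ 2 - 1)

/-- `‖𝓔ₙ‖²`: squared Frobenius norm of the nonunital (bottom-left) column block. -/
noncomputable def nSq (A : Fin (d ^ 2) → Mat d) (E : Mat d →ₗ[ℂ] Mat d) : ℝ :=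
  ∑ k ∈ Finset.univ.filter (fun k : Fin (d ^ 2) => (k : ℕ) ≠ 0),
    ∑ l ∈ Finset.univ.filter (fun l : Fin (d ^ 2) => (l : ℕ) = 0),
      ‖Liou A E k l‖ ^ 2

/-- `‖𝓔_sdl‖²`: squared Frobenius norm of the state-dependent-leakage (top-right) row block. -/
noncomputable def sdlSq (A : Fin (d ^ 2) → Mat d) (E : Mat d →ₗ[ℂ] Mat d) : ℝ :=
  ∑ k ∈ Finset.univ.filter (fun k : Fin (d ^ 2) => (k : ℕ) = 0),
    ∑ l ∈ Finset.univ.filter (fun l : Fin (d ^ 2) => (l : ℕ) ≠ 0),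
      ‖Liou A E k l‖ ^ 2

/-- The average survival rate `S(E) = Tr(E(𝟙))/d` (real part). -/
noncomputable def survival (d : ℕ) (E : Mat d →ₗ[ℂ] Mat d) : ℝ :=
  (Matrix.trace (E 1)).re / d

/-- The swap operator `S` on `ℂ^d ⊗ ℂ^d`, `S(x⊗y) = y⊗x`. -/
def swap (d : ℕ) : Mat2 d :=
  Matrix.of fun p q => if p.1 = q.2 ∧ p.2 = q.1 then 1 else 0

/-- The Choi matrix `∑_{j,k} E(|j⟩⟨k|) ⊗ |j⟩⟨k|`. -/
noncomputable def choi (E : Mat d →ₗ[ℂ] Mat d) : Mat2 d :=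
  Matrix.of fun p q => E (Matrix.single p.2 q.2 1) p.1 q.1

/-- Complete positivity: the Choi matrix is positive semidefinite. -/
def IsCP (E : Mat d →ₗ[ℂ] Mat d) : Prop := (choi E).PosSemidef

/-- Trace preserving. -/
def IsTP (E : Mat d →ₗ[ℂ] Mat d) : Prop := ∀ X : Mat d, (E X).trace = X.trace

/-- Trace nonincreasing on positive semidefinite inputs (with the complex order). -/
def IsTNI (E : Mat d →ₗ[ℂ] Mat d) : Prop :=
  ∀ ρ : Mat d, ρ.PosSemidef → (E ρ).trace ≤ ρ.trace

/-- Hermiticity preserving. -/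
def IsHermPreserving (E : Mat d →ₗ[ℂ] Mat d) : Prop := ∀ X : Mat d, E Xᴴ = (E X)ᴴ

/-- The induced map `E ⊗ F` on `M_{d²}(ℂ) = M_d(ℂ) ⊗ M_d(ℂ)`; it is the unique
linear map satisfying `(E ⊗ F)(A ⊗ₖ B) = E(A) ⊗ₖ F(B)`. -/
noncomputable def tensorMap (E F : Mat d →ₗ[ℂ] Mat d) : Mat2 d →ₗ[ℂ] Mat2 d where
  toFun X := Matrix.of fun p q =>
    ∑ i : Fin d, ∑ j : Fin d, ∑ k : Fin d, ∑ l : Fin d,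
      X (i, k) (j, l) *
        (E (Matrix.single i j 1) p.1 q.1 * F (Matrix.single k l 1) p.2 q.2)
  map_add' X Y := by
    ext p q
    simp [Matrix.add_apply, add_mul, Finset.sum_add_distrib]
  map_smul' c X := by
    ext p q
    simp [Matrix.smul_apply, Finset.mul_sum, smul_eq_mul, mul_assoc]

/-- Conjugation `ρ ↦ U ρ Uᴴ` as a linear map. -/
noncomputable def conjMap (U : Mat d) : Mat d →ₗ[ℂ] Mat d :=
  LinearMap.mulLeft ℂ U ∘ₗ LinearMap.mulRight ℂ Uᴴ

/-- `B₁ = 𝟙_{d²}/d`. -/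
noncomputable def B1 (d : ℕ) : Mat2 d := ((d : ℂ))⁻¹ • 1

/-- `B₂ = (S - 𝟙_{d²}/d)/√(d²-1)`. -/
noncomputable def B2 (d : ℕ) : Mat2 d :=
  ((Real.sqrt ((d : ℝ) ^ 2 - 1) : ℂ))⁻¹ • (swap d - ((d : ℂ))⁻¹ • 1)

/-- The 2×2 matrix `M(E)` with entries `M_{ij} = Tr[Bᵢ† (E⊗E)(Bⱼ)]`. -/
noncomputable def Mmat (E : Mat d →ₗ[ℂ] Mat d) : Matrix (Fin 2) (Fin 2) ℂ :=
  Matrix.of fun i j =>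
    Matrix.trace ((![B1 d, B2 d] i)ᴴ * tensorMap E E (![B1 d, B2 d] j))

/-- Auxiliary: interleave noise `E` and unitary conjugations along a list. -/
noncomputable def seqAux (E : Mat d →ₗ[ℂ] Mat d) : List (Mat d) → Mat d → Mat d
  | [], σ => σ
  | U :: rest, σ => seqAux E rest (U * E σ * Uᴴ)

/-- The output state `(𝓤_{j_m} ∘ E ∘ 𝓤_{j_{m-1}} ∘ E ∘ ⋯ ∘ E ∘ 𝓤_{j_1})(ρ)` for the
sequence of unitaries given by the list (head applied first). -/
noncomputable def seqState (E : Mat d →ₗ[ℂ] Mat d) : List (Mat d) → Mat d → Mat d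
  | [], ρ => ρ
  | U :: rest, ρ => seqAux E rest (U * ρ * Uᴴ)

/-!
Expanding the swap gives `Tr[S (E⊗E)(S)] = ∑ᵢⱼ Tr(E(eᵢⱼ) E(eⱼᵢ))`, and hermiticity preservation
turns `E(eⱼᵢ)` into `E(eᵢⱼ)†`, so the left side is `∑ᵢⱼ ‖E(eᵢⱼ)‖²`: the squared Hilbert–Schmidt
norm of `E` computed in the basis of matrix units. By Parseval the right side is `∑ₗ ‖E(Aₗ)‖²`,
the same norm computed in the basis `{Aₗ}`, and `∑ᵢ ‖T bᵢ‖² = Re Tr(T† T)` does not depend on the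
orthonormal basis `b`.
-/

open scoped InnerProductSpace

section HilbertSchmidt

variable {𝕜 ι κ E F : Type*} [RCLike 𝕜] [Fintype ι] [Fintype κ]
  [NormedAddCommGroup E] [InnerProductSpace 𝕜 E] [FiniteDimensional 𝕜 E]
  [NormedAddCommGroup F] [InnerProductSpace 𝕜 F] [FiniteDimensional 𝕜 F]

theorem OrthonormalBasis.sum_norm_sq_apply_eq_re_trace (b : OrthonormalBasis ι 𝕜 E)
    (T : E →ₗ[𝕜] F) :
    ∑ i, ‖T (b i)‖ ^ 2 = RCLike.re (LinearMap.trace 𝕜 E (LinearMap.adjoint T ∘ₗ T)) := by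
  simp only [LinearMap.trace_eq_sum_inner _ b, LinearMap.comp_apply,
    LinearMap.adjoint_inner_right, map_sum, inner_self_eq_norm_sq]

theorem OrthonormalBasis.sum_norm_sq_apply_eq (b : OrthonormalBasis ι 𝕜 E)
    (c : OrthonormalBasis κ 𝕜 E) (T : E →ₗ[𝕜] F) :
    ∑ i, ‖T (b i)‖ ^ 2 = ∑ j, ‖T (c j)‖ ^ 2 := by
  rw [b.sum_norm_sq_apply_eq_re_trace, c.sum_norm_sq_apply_eq_re_trace]

end HilbertSchmidt

section Swap

variable {d : ℕ}

theorem trace_swap_mul (X : Mat2 d) : (swap d * X).trace = ∑ p, X p.swap p := by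
  refine Finset.sum_congr rfl fun p _ => ?_
  rw [diag_apply, mul_apply, Finset.sum_eq_single p.swap]
  · simp [_root_.swap]
  · rintro q - hq
    simp only [_root_.swap, of_apply, ite_mul, one_mul, zero_mul, ite_eq_right_iff, and_imp]
    exact fun h₁ h₂ => absurd (Prod.ext h₂.symm h₁.symm) hq
  · simp

theorem tensorMap_swap_apply (E F : Mat d →ₗ[ℂ] Mat d) (p q : Fin d × Fin d) :
    tensorMap E F (swap d) p q =
      ∑ i, ∑ j, E (single i j 1) p.1 q.1 * F (single j i 1) p.2 q.2 := by
  simp only [tensorMap, LinearMap.coe_mk, AddHom.coe_mk, of_apply, _root_.swap]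
  refine Finset.sum_congr rfl fun i _ => Finset.sum_congr rfl fun j _ => ?_
  rw [Finset.sum_eq_single j (fun k _ hk => by simp [hk]) (by simp),
    Finset.sum_eq_single i (fun l _ hl => by simp [Ne.symm hl]) (by simp)]
  simp

theorem trace_swap_mul_tensorMap_swap (E F : Mat d →ₗ[ℂ] Mat d) :
    (swap d * tensorMap E F (swap d)).trace =
      ∑ i, ∑ j, (E (single i j 1) * F (single j i 1)).trace := by
  simp only [trace_swap_mul, tensorMap_swap_apply]
  rw [Finset.sum_comm]
  refine Finset.sum_congr rfl fun i _ => ?_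
  rw [Finset.sum_comm]
  refine Finset.sum_congr rfl fun j _ => ?_
  rw [Fintype.sum_prod_type, Finset.sum_comm]
  rfl

theorem IsHermPreserving.trace_swap_mul_tensorMap_swap {E : Mat d →ₗ[ℂ] Mat d}
    (hE : IsHermPreserving E) :
    (swap d * tensorMap E E (swap d)).trace =
      ∑ i, ∑ j, ((E (single i j 1))ᴴ * E (single i j 1)).trace := by
  rw [_root_.trace_swap_mul_tensorMap_swap]
  refine Finset.sum_congr rfl fun i _ => Finset.sum_congr rfl fun j _ => ?_
  have hji : single j i (1 : ℂ) = (single i j 1)ᴴ := by rw [conjTranspose_single, star_one]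
  rw [hji, hE, trace_mul_comm]

end Swap

section HilbertSchmidtSpace

variable {𝕜 ι m n : Type*} [RCLike 𝕜]

noncomputable def hsEquiv : Matrix m n 𝕜 ≃ₗ[𝕜] EuclideanSpace 𝕜 (m × n) :=
  (LinearEquiv.curry 𝕜 𝕜 m n).symm ≪≫ₗ (WithLp.linearEquiv 2 𝕜 _).symm

theorem hsEquiv_apply (X : Matrix m n 𝕜) (p : m × n) : hsEquiv X p = X p.1 p.2 := rfl

theorem hsEquiv_single [DecidableEq m] [DecidableEq n] (i : m) (j : n) :
    hsEquiv (single i j (1 : 𝕜)) = EuclideanSpace.single (i, j) 1 := by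
  ext p
  simp [hsEquiv_apply, single_apply, Prod.ext_iff, eq_comm]

variable [Fintype m] [Fintype n]

theorem inner_hsEquiv (X Y : Matrix m n 𝕜) :
    ⟪hsEquiv X, hsEquiv Y⟫_𝕜 = (Xᴴ * Y).trace := by
  simp only [PiLp.inner_apply, hsEquiv_apply, RCLike.inner_apply, trace, diag_apply, mul_apply,
    conjTranspose_apply, Fintype.sum_prod_type]
  rw [Finset.sum_comm]
  simp [mul_comm]

theorem norm_hsEquiv_sq (X : Matrix m n 𝕜) : ((‖hsEquiv X‖ ^ 2 : ℝ) : 𝕜) = (Xᴴ * X).trace := by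
  rw [← inner_hsEquiv, inner_self_eq_norm_sq_to_K]
  norm_cast

variable [Fintype ι] [DecidableEq ι]

noncomputable def hsOrthonormalBasis (A : ι → Matrix m n 𝕜)
    (horth : ∀ k l, ((A k)ᴴ * A l).trace = if k = l then 1 else 0)
    (hspan : Submodule.span 𝕜 (Set.range A) = ⊤) :
    OrthonormalBasis ι 𝕜 (EuclideanSpace 𝕜 (m × n)) :=
  OrthonormalBasis.mk (v := hsEquiv ∘ A)
    (orthonormal_iff_ite.mpr fun k l => by simp only [Function.comp_apply, inner_hsEquiv, horth])
    (by rw [Set.range_comp, ← LinearEquiv.coe_coe, ← Submodule.map_span, hspan, Submodule.map_top,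
      LinearEquiv.range])

theorem hsOrthonormalBasis_apply (A : ι → Matrix m n 𝕜)
    (horth : ∀ k l, ((A k)ᴴ * A l).trace = if k = l then 1 else 0)
    (hspan : Submodule.span 𝕜 (Set.range A) = ⊤) (k : ι) :
    hsOrthonormalBasis A horth hspan k = hsEquiv (A k) := by
  simp [hsOrthonormalBasis]

end HilbertSchmidtSpace

theorem statement_3_general (d : ℕ)
    (A : Fin (d ^ 2) → Mat d)
    (horth : ∀ k l : Fin (d ^ 2), Matrix.trace ((A k)ᴴ * A l) = if k = l then 1 else 0)
    (hspan : Submodule.span ℂ (Set.range A) = ⊤)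
    (E : Mat d →ₗ[ℂ] Mat d) (hE : IsHermPreserving E) :
    Matrix.trace (swap d * tensorMap E E (swap d))
      = ((∑ k : Fin (d ^ 2), ∑ l : Fin (d ^ 2), ‖Liou A E k l‖ ^ 2 : ℝ) : ℂ) := by
  set T := hsEquiv.conj E
  set b := hsOrthonormalBasis A horth hspan
  have hT (X : Mat d) : T (hsEquiv X) = hsEquiv (E X) := by simp [T, LinearEquiv.conj_apply]
  have hb (k : Fin (d ^ 2)) : T (b k) = hsEquiv (E (A k)) := by
    rw [hsOrthonormalBasis_apply, hT]
  have lhs : (swap d * tensorMap E E (swap d)).trace =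
      ((∑ p, ‖T (EuclideanSpace.basisFun (Fin d × Fin d) ℂ p)‖ ^ 2 : ℝ) : ℂ) := by
    rw [hE.trace_swap_mul_tensorMap_swap, Complex.ofReal_sum, Fintype.sum_prod_type]
    refine Finset.sum_congr rfl fun i _ => Finset.sum_congr rfl fun j _ => ?_
    rw [EuclideanSpace.basisFun_apply, ← hsEquiv_single, hT]
    exact (norm_hsEquiv_sq _).symm
  have rhs : ∑ k, ∑ l, ‖Liou A E k l‖ ^ 2 = ∑ l, ‖T (b l)‖ ^ 2 := by
    rw [Finset.sum_comm]
    refine Finset.sum_congr rfl fun l _ => ?_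
    rw [← b.sum_sq_norm_inner_right, hb]
    simp only [b, hsOrthonormalBasis_apply, inner_hsEquiv, Liou, of_apply]
  rw [lhs, rhs, (EuclideanSpace.basisFun _ ℂ).sum_norm_sq_apply_eq b]

/-- For hermiticity-preserving `E`,
`Tr[S (E⊗E)(S)] = ∑_{k,l} |𝓔_{kl}|²`, the squared Frobenius norm of the Liouville
representation of `E`. -/
theorem statement_3 (d : ℕ) (hd : 2 ≤ d)
    (A : Fin (d ^ 2) → Mat d)
    (horth : ∀ k l : Fin (d ^ 2), Matrix.trace ((A k)ᴴ * A l) = if k = l then 1 else 0)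
    (hspan : Submodule.span ℂ (Set.range A) = ⊤)
    (E : Mat d →ₗ[ℂ] Mat d) (hE : IsHermPreserving E) :
    Matrix.trace (swap d * tensorMap E E (swap d))
      = ((∑ k : Fin (d ^ 2), ∑ l : Fin (d ^ 2), ‖Liou A E k l‖ ^ 2 : ℝ) : ℂ) :=
  statement_3_general d A horth hspan E hE
end

section
/- Let E : M_d(ℂ) → M_d(ℂ) be a hermiticity-preserving linear map, and let M(E) be the 2×2 matrix with entries M_{ij} = Tr[B_i† (E⊗E)(B_j)]. Then M_{11} = S(E)², M_{12} = ‖𝓔_sdl‖²/√(d²−1), M_{21} = ‖𝓔_n‖²/√(d²−1), and M_{22} = Tr(𝓔_u† 𝓔_u)/(d²−1) = u(E). -/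
open Matrix Kronecker ComplexOrder MeasureTheory

variable {d : ℕ}

/-!
Since `B₁` and `B₂` are combinations of `𝟙` and the swap `S`, each entry of `M(E)` is a
combination of `Tr (E⊗E)(𝟙) = (Tr E(𝟙))²`, `Tr S (E⊗E)(𝟙) = Tr E(𝟙)²`,
`Tr (E⊗E)(S) = ∑ᵢⱼ Tr E(eᵢⱼ) Tr E(eⱼᵢ)` and `Tr S (E⊗E)(S) = ∑ᵢⱼ Tr E(eᵢⱼ) E(eⱼᵢ)`.
For hermiticity-preserving `E` these are, up to powers of `d`, the squared norms of the corner,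
the first column, the first row and the whole Liouville matrix computed in the basis of matrix
units `eᵢⱼ`. By Parseval's identity `∑ₖ |φ(Aₖ)|²` does not depend on the orthonormal basis `A`, so
the same numbers are obtained in the basis `A`, and the blocks are differences of these.
-/

section HilbertSchmidt

variable {m n ι M : Type*} [Fintype m] [Fintype n] [DecidableEq m] [DecidableEq n]

lemma LinearMap.map_matrix_eq_sum_single {R : Type*} [CommSemiring R] [AddCommMonoid M]
    [Module R M] (f : Matrix m n R →ₗ[R] M) (X : Matrix m n R) :
    f X = ∑ i, ∑ j, X i j • f (Matrix.single i j 1) := by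
  conv_lhs => rw [Matrix.matrix_eq_sum_single X]
  simp only [map_sum, ← f.map_smul, Matrix.smul_single, smul_eq_mul, mul_one]

omit [DecidableEq m] [DecidableEq n] in
lemma Matrix.ofReal_sum_norm_sq_eq_trace (X : Matrix m n ℂ) :
    ((∑ i, ∑ j, ‖X i j‖ ^ 2 : ℝ) : ℂ) = (Xᴴ * X).trace := by
  simp only [Matrix.trace, Matrix.diag_apply, Matrix.mul_apply, Matrix.conjTranspose_apply]
  rw [Finset.sum_comm]
  push_cast
  refine Finset.sum_congr rfl fun i _ => Finset.sum_congr rfl fun j _ => ?_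
  rw [← Complex.conj_mul', RCLike.star_def]

variable [Fintype ι] [DecidableEq ι] {A : ι → Matrix m n ℂ}
  (horth : ∀ k l, ((A k)ᴴ * A l).trace = if k = l then 1 else 0)
  (hspan : Submodule.span ℂ (Set.range A) = ⊤)
include horth hspan

omit [DecidableEq m] [DecidableEq n] in
lemma sum_trace_conjTranspose_mul_smul_eq_self (X : Matrix m n ℂ) :
    ∑ k, ((A k)ᴴ * X).trace • A k = X := by
  let P : Matrix m n ℂ →ₗ[ℂ] Matrix m n ℂ :=
    { toFun := fun X => ∑ k, ((A k)ᴴ * X).trace • A k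
      map_add' := fun X Y => by
        simp [Matrix.mul_add, Matrix.trace_add, add_smul, Finset.sum_add_distrib]
      map_smul' := fun c X => by
        simp [Matrix.mul_smul, Matrix.trace_smul, smul_smul, Finset.smul_sum] }
  have hP : P = LinearMap.id := by
    refine LinearMap.ext_on hspan ?_
    rintro _ ⟨l, rfl⟩
    simp [P, horth]
  simpa [P] using LinearMap.congr_fun hP X

omit [DecidableEq m] [DecidableEq n] in
lemma sum_norm_sq_trace_conjTranspose_mul (X : Matrix m n ℂ) :
    ∑ k, ‖((A k)ᴴ * X).trace‖ ^ 2 = ∑ i, ∑ j, ‖X i j‖ ^ 2 := by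
  have hconj : ∀ k, star ((A k)ᴴ * X).trace = (Xᴴ * A k).trace := fun k => by
    rw [← Matrix.trace_conjTranspose, Matrix.conjTranspose_mul, Matrix.conjTranspose_conjTranspose]
  apply Complex.ofReal_injective
  rw [Matrix.ofReal_sum_norm_sq_eq_trace,
    ← congrArg (fun Y => (Xᴴ * Y).trace) (sum_trace_conjTranspose_mul_smul_eq_self horth hspan X)]
  push_cast
  simp only [Matrix.mul_sum, Matrix.trace_sum, Matrix.mul_smul, Matrix.trace_smul, smul_eq_mul,
    ← Complex.mul_conj', ← RCLike.star_def, hconj]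

lemma sum_norm_sq_map_eq_sum_single (φ : Matrix m n ℂ →ₗ[ℂ] ℂ) :
    ∑ k, ‖φ (A k)‖ ^ 2 = ∑ i, ∑ j, ‖φ (Matrix.single i j 1)‖ ^ 2 := by
  -- `C` represents `φ` through the Hilbert–Schmidt inner product.
  set C : Matrix m n ℂ := Matrix.of fun i j => star (φ (Matrix.single i j 1))
  have hφ : ∀ X, φ X = star (Xᴴ * C).trace := fun X => by
    rw [φ.map_matrix_eq_sum_single X]
    simp [C, Matrix.trace, Matrix.mul_apply, Finset.sum_comm (γ := n)]
  calc ∑ k, ‖φ (A k)‖ ^ 2 = ∑ k, ‖((A k)ᴴ * C).trace‖ ^ 2 := by simp only [hφ, norm_star]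
    _ = ∑ i, ∑ j, ‖C i j‖ ^ 2 := sum_norm_sq_trace_conjTranspose_mul horth hspan C
    _ = ∑ i, ∑ j, ‖φ (Matrix.single i j 1)‖ ^ 2 := by simp [C]

end HilbertSchmidt

section Liouville

variable {A : Fin (d ^ 2) → Mat d} (E : Mat d →ₗ[ℂ] Mat d)

lemma liou_apply_of_eq_smul_one_left {k : Fin (d ^ 2)} {c : ℂ} (hk : A k = c • 1)
    (l : Fin (d ^ 2)) : Liou A E k l = star c * (E (A l)).trace := by
  simp [Liou, hk, Matrix.conjTranspose_smul, Matrix.trace_smul]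

lemma liou_apply_of_eq_smul_one_right {l : Fin (d ^ 2)} {c : ℂ} (hl : A l = c • 1)
    (k : Fin (d ^ 2)) : Liou A E k l = c * ((A k)ᴴ * E 1).trace := by
  simp [Liou, hl, Matrix.trace_smul]

lemma norm_sq_inv_sqrt_natCast (n : ℕ) : ‖((Real.sqrt n : ℝ) : ℂ)⁻¹‖ ^ 2 = (n : ℝ)⁻¹ := by
  rw [norm_inv, inv_pow, Complex.norm_real, Real.norm_eq_abs, sq_abs, Real.sq_sqrt n.cast_nonneg]

lemma norm_sq_liou_of_eq_inv_sqrt_smul_one {k₀ : Fin (d ^ 2)}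
    (hk₀ : A k₀ = ((Real.sqrt d : ℝ) : ℂ)⁻¹ • 1) :
    ‖Liou A E k₀ k₀‖ ^ 2 = ‖(E 1).trace‖ ^ 2 / d ^ 2 := by
  rw [liou_apply_of_eq_smul_one_left E hk₀, hk₀, map_smul, Matrix.trace_smul, smul_eq_mul,
    norm_mul, norm_mul, norm_star, mul_pow, mul_pow, norm_sq_inv_sqrt_natCast]
  ring

variable (horth : ∀ k l : Fin (d ^ 2), ((A k)ᴴ * A l).trace = if k = l then 1 else 0)
  (hspan : Submodule.span ℂ (Set.range A) = ⊤)
include horth hspan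

lemma sum_sum_norm_sq_liou :
    ∑ k, ∑ l, ‖Liou A E k l‖ ^ 2 = ∑ a, ∑ b, ∑ i, ∑ j, ‖E (Matrix.single a b 1) i j‖ ^ 2 := by
  calc ∑ k, ∑ l, ‖Liou A E k l‖ ^ 2
      = ∑ k, ∑ a, ∑ b, ‖((A k)ᴴ * E (Matrix.single a b 1)).trace‖ ^ 2 :=
        Finset.sum_congr rfl fun k _ => sum_norm_sq_map_eq_sum_single horth hspan
          (Matrix.traceLinearMap (Fin d) ℂ ℂ ∘ₗ LinearMap.mulLeft ℂ (A k)ᴴ ∘ₗ E)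
    _ = ∑ a, ∑ b, ∑ k, ‖((A k)ᴴ * E (Matrix.single a b 1)).trace‖ ^ 2 := by
        rw [Finset.sum_comm]
        exact Finset.sum_congr rfl fun a _ => Finset.sum_comm
    _ = ∑ a, ∑ b, ∑ i, ∑ j, ‖E (Matrix.single a b 1) i j‖ ^ 2 := by
        simp only [sum_norm_sq_trace_conjTranspose_mul horth hspan]

variable {k₀ : Fin (d ^ 2)} (hk₀ : A k₀ = ((Real.sqrt d : ℝ) : ℂ)⁻¹ • 1)
include hk₀

lemma sum_norm_sq_liou_row :
    ∑ l, ‖Liou A E k₀ l‖ ^ 2 = (∑ a, ∑ b, ‖(E (Matrix.single a b 1)).trace‖ ^ 2) / d := by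
  have h := sum_norm_sq_map_eq_sum_single horth hspan (Matrix.traceLinearMap (Fin d) ℂ ℂ ∘ₗ E)
  simp only [LinearMap.comp_apply, Matrix.traceLinearMap_apply] at h
  rw [← h, div_eq_inv_mul, Finset.mul_sum]
  simp only [liou_apply_of_eq_smul_one_left E hk₀, norm_mul, mul_pow, norm_star,
    norm_sq_inv_sqrt_natCast]

lemma sum_norm_sq_liou_col :
    ∑ k, ‖Liou A E k k₀‖ ^ 2 = (∑ i, ∑ j, ‖E 1 i j‖ ^ 2) / d := by
  simp only [liou_apply_of_eq_smul_one_right E hk₀, norm_mul, mul_pow, norm_sq_inv_sqrt_natCast,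
    ← Finset.mul_sum, sum_norm_sq_trace_conjTranspose_mul horth hspan]
  rw [div_eq_inv_mul]

end Liouville

section Blocks

lemma Fin.filter_val_eq_zero {n : ℕ} (h : 0 < n) :
    Finset.univ.filter (fun k : Fin n => (k : ℕ) = 0) = {⟨0, h⟩} := by
  ext k
  simp [Fin.ext_iff]

lemma Fin.filter_val_ne_zero {n : ℕ} (h : 0 < n) :
    Finset.univ.filter (fun k : Fin n => (k : ℕ) ≠ 0) = Finset.univ.erase ⟨0, h⟩ := by
  ext k
  simp [Fin.ext_iff]

variable (A : Fin (d ^ 2) → Mat d) (E : Mat d →ₗ[ℂ] Mat d) (h : 0 < d ^ 2)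
include h

lemma sdlSq_eq : sdlSq A E = ∑ l, ‖Liou A E ⟨0, h⟩ l‖ ^ 2 - ‖Liou A E ⟨0, h⟩ ⟨0, h⟩‖ ^ 2 := by
  rw [sdlSq, Fin.filter_val_eq_zero h, Fin.filter_val_ne_zero h, Finset.sum_singleton,
    Finset.sum_erase_eq_sub (Finset.mem_univ _)]

lemma nSq_eq : nSq A E = ∑ k, ‖Liou A E k ⟨0, h⟩‖ ^ 2 - ‖Liou A E ⟨0, h⟩ ⟨0, h⟩‖ ^ 2 := by
  simp only [nSq, Fin.filter_val_eq_zero h, Fin.filter_val_ne_zero h, Finset.sum_singleton]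
  rw [Finset.sum_erase_eq_sub (Finset.mem_univ _)]

lemma unitarity_eq : unitarity A E =
    (∑ k, ∑ l, ‖Liou A E k l‖ ^ 2 - ∑ l, ‖Liou A E ⟨0, h⟩ l‖ ^ 2 - ∑ k, ‖Liou A E k ⟨0, h⟩‖ ^ 2
      + ‖Liou A E ⟨0, h⟩ ⟨0, h⟩‖ ^ 2) / ((d : ℝ) ^ 2 - 1) := by
  simp only [unitarity, Fin.filter_val_ne_zero h,
    Finset.sum_erase_eq_sub (Finset.mem_univ _), Finset.sum_sub_distrib]
  ring

end Blocks

section TensorMap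

lemma tensorMap_kronecker (E F : Mat d →ₗ[ℂ] Mat d) (X Y : Mat d) :
    tensorMap E F (X ⊗ₖ Y) = E X ⊗ₖ F Y := by
  ext p q
  rw [E.map_matrix_eq_sum_single X, F.map_matrix_eq_sum_single Y]
  simp only [tensorMap, LinearMap.coe_mk, AddHom.coe_mk, Matrix.of_apply,
    Matrix.kroneckerMap_apply, Matrix.sum_apply, Matrix.smul_apply, smul_eq_mul,
    Finset.sum_mul_sum]
  refine Finset.sum_congr rfl fun i _ => ?_
  rw [Finset.sum_comm]
  refine Finset.sum_congr rfl fun j _ => Finset.sum_congr rfl fun k _ =>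
    Finset.sum_congr rfl fun l _ => by ring

lemma swap_eq_sum_kronecker (d : ℕ) :
    swap d = ∑ i, ∑ j, Matrix.single i j 1 ⊗ₖ Matrix.single j i 1 := by
  ext p q
  simp [_root_.swap, Matrix.sum_apply, Matrix.single_apply, ite_and, eq_comm]

lemma swap_conjTranspose (d : ℕ) : (swap d)ᴴ = swap d := by
  ext p q
  simp [_root_.swap, Matrix.conjTranspose_apply, and_comm, eq_comm]

lemma trace_swap_mul_kronecker (X Y : Mat d) : (swap d * (X ⊗ₖ Y)).trace = (X * Y).trace := by
  simpa [Matrix.trace, Matrix.mul_apply, _root_.swap, Fintype.sum_prod_type, ite_and]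
    using Finset.sum_comm

lemma tensorMap_one (E F : Mat d →ₗ[ℂ] Mat d) : tensorMap E F 1 = E 1 ⊗ₖ F 1 := by
  rw [← Matrix.one_kronecker_one, tensorMap_kronecker]

lemma tensorMap_swap (E F : Mat d →ₗ[ℂ] Mat d) :
    tensorMap E F (swap d) = ∑ i, ∑ j, E (Matrix.single i j 1) ⊗ₖ F (Matrix.single j i 1) := by
  simp only [swap_eq_sum_kronecker, map_sum, tensorMap_kronecker]

end TensorMap

section Mmat

variable (E : Mat d →ₗ[ℂ] Mat d)

local notation "s" => ((Real.sqrt ((d : ℝ) ^ 2 - 1) : ℝ) : ℂ)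

lemma Mmat_apply (i j : Fin 2) :
    Mmat E i j = (![B1 d, B2 d] i * tensorMap E E (![B1 d, B2 d] j)).trace := by
  have hB1 : (B1 d)ᴴ = B1 d := by simp [B1, Matrix.conjTranspose_smul]
  have hB2 : (B2 d)ᴴ = B2 d := by
    simp [B2, Matrix.conjTranspose_smul, swap_conjTranspose, Complex.conj_ofReal]
  fin_cases i <;> simp [Mmat, hB1, hB2]

lemma Mmat_zero_zero : Mmat E 0 0 = (tensorMap E E 1).trace / d ^ 2 := by
  simp only [Mmat_apply, Matrix.cons_val_zero, B1, map_smul, smul_mul_smul_comm, one_mul,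
    Matrix.trace_smul, smul_eq_mul]
  ring

lemma Mmat_zero_one : Mmat E 0 1 =
    ((tensorMap E E (swap d)).trace - (tensorMap E E 1).trace / d) / (d * s) := by
  simp only [Mmat_apply, Matrix.cons_val_zero, Matrix.cons_val_one, Matrix.cons_val_fin_one, B1,
    B2, map_smul, map_sub, smul_mul_smul_comm, one_mul, Matrix.trace_smul, Matrix.trace_sub,
    smul_eq_mul]
  ring

lemma Mmat_one_zero : Mmat E 1 0 =
    ((swap d * tensorMap E E 1).trace - (tensorMap E E 1).trace / d) / (d * s) := by
  simp only [Mmat_apply, Matrix.cons_val_zero, Matrix.cons_val_one, Matrix.cons_val_fin_one, B1,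
    B2, map_smul, Matrix.sub_mul, smul_mul_assoc, mul_smul_comm, one_mul, Matrix.trace_smul,
    Matrix.trace_sub, smul_eq_mul]
  ring

lemma Mmat_one_one : Mmat E 1 1 =
    ((swap d * tensorMap E E (swap d)).trace - (swap d * tensorMap E E 1).trace / d
      - (tensorMap E E (swap d)).trace / d + (tensorMap E E 1).trace / d ^ 2) / s ^ 2 := by
  simp only [Mmat_apply, Matrix.cons_val_one, Matrix.cons_val_fin_one, B2, map_smul, map_sub,
    Matrix.sub_mul, Matrix.mul_sub, smul_mul_assoc, mul_smul_comm, one_mul, Matrix.trace_smul,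
    Matrix.trace_sub, smul_eq_mul]
  ring

end Mmat

section HermPreserving

variable {E : Mat d →ₗ[ℂ] Mat d} (hE : IsHermPreserving E)
include hE

lemma IsHermPreserving.trace_map_conjTranspose (X : Mat d) :
    (E Xᴴ).trace = star (E X).trace := by
  rw [hE X, Matrix.trace_conjTranspose]

lemma IsHermPreserving.ofReal_norm_sq_trace_map_one :
    ((‖(E 1).trace‖ ^ 2 : ℝ) : ℂ) = (tensorMap E E 1).trace := by
  have hreal : star (E 1).trace = (E 1).trace := by
    rw [← hE.trace_map_conjTranspose, Matrix.conjTranspose_one]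
  push_cast
  rw [tensorMap_one, Matrix.trace_kronecker, ← Complex.mul_conj', ← RCLike.star_def, hreal]

lemma IsHermPreserving.ofReal_sum_norm_sq_trace_map_single :
    ((∑ i, ∑ j, ‖(E (Matrix.single i j 1)).trace‖ ^ 2 : ℝ) : ℂ) =
      (tensorMap E E (swap d)).trace := by
  simp only [tensorMap_swap, Matrix.trace_sum, Matrix.trace_kronecker]
  push_cast
  simp only [← Complex.mul_conj', ← RCLike.star_def, ← hE.trace_map_conjTranspose,
    Matrix.conjTranspose_single, star_one]

lemma IsHermPreserving.ofReal_sum_norm_sq_map_one_apply :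
    ((∑ i, ∑ j, ‖E 1 i j‖ ^ 2 : ℝ) : ℂ) = (swap d * tensorMap E E 1).trace := by
  rw [Matrix.ofReal_sum_norm_sq_eq_trace, tensorMap_one, trace_swap_mul_kronecker, ← hE,
    Matrix.conjTranspose_one]

lemma IsHermPreserving.ofReal_sum_norm_sq_map_single_apply :
    ((∑ a, ∑ b, ∑ i, ∑ j, ‖E (Matrix.single a b 1) i j‖ ^ 2 : ℝ) : ℂ) =
      (swap d * tensorMap E E (swap d)).trace := by
  have hentry : ∀ a b, ((∑ i, ∑ j, ‖E (Matrix.single a b 1) i j‖ ^ 2 : ℝ) : ℂ) =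
      (E (Matrix.single b a 1) * E (Matrix.single a b 1)).trace := fun a b => by
    rw [Matrix.ofReal_sum_norm_sq_eq_trace, ← hE, Matrix.conjTranspose_single, star_one]
  simp only [tensorMap_swap, Matrix.mul_sum, Matrix.trace_sum, trace_swap_mul_kronecker,
    Complex.ofReal_sum, ← hentry]
  exact Finset.sum_comm

end HermPreserving

/-- The entries of the 2×2 matrix `M(E)`:
`M₁₁ = S(E)²`, `M₁₂ = ‖𝓔_sdl‖²/√(d²−1)`, `M₂₁ = ‖𝓔ₙ‖²/√(d²−1)`, `M₂₂ = u(E)`. -/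
theorem statement_5 (d : ℕ) (hd : 2 ≤ d)
    (A : Fin (d ^ 2) → Mat d)
    (horth : ∀ k l : Fin (d ^ 2), Matrix.trace ((A k)ᴴ * A l) = if k = l then 1 else 0)
    (hspan : Submodule.span ℂ (Set.range A) = ⊤)
    (hA0 : ∀ k : Fin (d ^ 2), (k : ℕ) = 0 → A k = ((Real.sqrt d : ℝ) : ℂ)⁻¹ • 1)
    (E : Mat d →ₗ[ℂ] Mat d) (hE : IsHermPreserving E) :
    Mmat E 0 0 = (Matrix.trace (E 1) / (d : ℂ)) ^ 2 ∧
    Mmat E 0 1 = ((sdlSq A E : ℝ) : ℂ) / ((Real.sqrt ((d : ℝ) ^ 2 - 1) : ℝ) : ℂ) ∧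
    Mmat E 1 0 = ((nSq A E : ℝ) : ℂ) / ((Real.sqrt ((d : ℝ) ^ 2 - 1) : ℝ) : ℂ) ∧
    Mmat E 1 1 = ((unitarity A E : ℝ) : ℂ) := by
  have hd₀ : 0 < d ^ 2 := by positivity
  have hA : A ⟨0, hd₀⟩ = ((Real.sqrt d : ℝ) : ℂ)⁻¹ • 1 := hA0 _ rfl
  have hd₁ : (4 : ℝ) ≤ (d : ℝ) ^ 2 := by
    have : (2 : ℝ) ≤ d := by exact_mod_cast hd
    nlinarith
  have hs : ((Real.sqrt ((d : ℝ) ^ 2 - 1) : ℝ) : ℂ) ^ 2 = (d : ℂ) ^ 2 - 1 := by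
    rw [← Complex.ofReal_pow, Real.sq_sqrt (by linarith)]
    push_cast
    ring
  have hs₀ : (d : ℂ) ^ 2 - 1 ≠ 0 := by
    exact_mod_cast (by linarith : (d : ℝ) ^ 2 - 1 ≠ 0)
  refine ⟨by rw [Mmat_zero_zero, tensorMap_one, Matrix.trace_kronecker]; ring, ?_⟩
  rw [Mmat_zero_one, Mmat_one_zero, Mmat_one_one,
    ← hE.ofReal_norm_sq_trace_map_one, ← hE.ofReal_sum_norm_sq_trace_map_single,
    ← hE.ofReal_sum_norm_sq_map_one_apply, ← hE.ofReal_sum_norm_sq_map_single_apply,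
    sdlSq_eq A E hd₀, nSq_eq A E hd₀, unitarity_eq A E hd₀,
    sum_sum_norm_sq_liou E horth hspan, sum_norm_sq_liou_row E horth hspan hA,
    sum_norm_sq_liou_col E horth hspan hA, norm_sq_liou_of_eq_inv_sqrt_smul_one E hA]
  refine ⟨?_, ?_, ?_⟩ <;> push_cast
  · field_simp
  · field_simp
  · rw [hs]
    field_simp
    ring
end

section
/- For any linear map E : M_d(ℂ) → M_d(ℂ) and any unitaries U, V ∈ U(d), letting 𝓤(ρ) = UρU† and 𝓥(ρ) = VρV†, the unitarity is invariant under unitary pre- and post-composition: u(𝓥 ∘ E ∘ 𝓤) = u(E). -/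
open Matrix Kronecker ComplexOrder MeasureTheory

variable {d : ℕ}

/-! A unitary conjugation `X ↦ W X Wᴴ` preserves the Hilbert–Schmidt inner product
`⟨X, Y⟩ = Tr (Xᴴ Y)` and fixes `𝟙`, so it maps the basis `A` to another orthonormal basis with
the same first element. Hence `Liou A (𝓥 ∘ E ∘ 𝓤) k l = ⟨Vᴴ A_k V, E (U A_l Uᴴ)⟩` is the
Liouville matrix of `E` read in two other orthonormal bases, and the Frobenius norm of its
unital block depends only on the orthogonal complement of `𝟙`, which all these bases share:
for the row index this is Parseval's identity, for the column index Parseval's identity applied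
to the Riesz representative of the functional `X ↦ ⟨A_k, E X⟩`. -/

open Matrix

lemma Finset.sum_eq_sum_of_sum_univ_eq {ι M : Type*} [Fintype ι] [DecidableEq ι]
    [AddCommGroup M] {f g : ι → M} (s : Finset ι) (h : ∑ i, f i = ∑ i, g i)
    (hs : ∀ i ∉ s, f i = g i) : ∑ i ∈ s, f i = ∑ i ∈ s, g i := by
  have hcompl : ∑ i ∈ sᶜ, f i = ∑ i ∈ sᶜ, g i :=
    Finset.sum_congr rfl fun i hi => hs i (Finset.mem_compl.mp hi)
  rw [← Finset.sum_add_sum_compl s f, ← Finset.sum_add_sum_compl s g, hcompl] at h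
  exact add_right_cancel h

section HilbertSchmidt

variable {n ι : Type*} [Fintype n] [DecidableEq n] [DecidableEq ι]

lemma Matrix.trace_conj_conjTranspose_mul_conj {U : Matrix n n ℂ} (hU : U ∈ unitaryGroup n ℂ)
    (X Y : Matrix n n ℂ) : trace ((U * X * Uᴴ)ᴴ * (U * Y * Uᴴ)) = trace (Xᴴ * Y) := by
  have hUU : Uᴴ * U = 1 := mem_unitaryGroup_iff'.mp hU
  rw [conjTranspose_mul, conjTranspose_mul, conjTranspose_conjTranspose,
    show U * (Xᴴ * Uᴴ) * (U * Y * Uᴴ) = U * (Xᴴ * (Uᴴ * U) * Y) * Uᴴ by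
      simp only [Matrix.mul_assoc],
    hUU, Matrix.mul_one, trace_mul_cycle, hUU, Matrix.one_mul]

lemma Matrix.conj_smul_one {U : Matrix n n ℂ} (hU : U ∈ unitaryGroup n ℂ) (c : ℂ) :
    U * (c • 1) * Uᴴ = c • 1 := by
  have hUU : U * Uᴴ = 1 := mem_unitaryGroup_iff.mp hU
  rw [Matrix.mul_smul, Matrix.mul_one, Matrix.smul_mul, hUU]

structure IsHSOrthonormalBasis (A : ι → Matrix n n ℂ) : Prop where
  orthonormal : ∀ k l, trace ((A k)ᴴ * A l) = if k = l then 1 else 0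
  span_eq_top : Submodule.span ℂ (Set.range A) = ⊤

namespace IsHSOrthonormalBasis

variable {A B : ι → Matrix n n ℂ}

lemma conj (hA : IsHSOrthonormalBasis A) {U : Matrix n n ℂ} (hU : U ∈ unitaryGroup n ℂ) :
    IsHSOrthonormalBasis fun k => U * A k * Uᴴ where
  orthonormal k l := by rw [trace_conj_conjTranspose_mul_conj hU, hA.orthonormal]
  span_eq_top := by
    set f : Matrix n n ℂ →ₗ[ℂ] Matrix n n ℂ := LinearMap.mulLeft ℂ U ∘ₗ LinearMap.mulRight ℂ Uᴴ
    have hUU : U * Uᴴ = 1 := mem_unitaryGroup_iff.mp hU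
    have hf : Function.Surjective f := fun X => ⟨Uᴴ * X * U, by
      change U * (Uᴴ * X * U * Uᴴ) = X
      rw [Matrix.mul_assoc _ U, hUU, Matrix.mul_one, ← Matrix.mul_assoc, hUU, Matrix.one_mul]⟩
    have hrange : Set.range (fun k => U * A k * Uᴴ) = f '' Set.range A := by
      rw [← Set.range_comp]
      simp [f, Function.comp_def, Matrix.mul_assoc]
    rw [hrange, Submodule.span_image, hA.span_eq_top, Submodule.map_top,
      LinearMap.range_eq_top.mpr hf]

variable [Fintype ι]

lemma sum_trace_mul_smul (hA : IsHSOrthonormalBasis A) (X : Matrix n n ℂ) :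
    ∑ k, trace ((A k)ᴴ * X) • A k = X := by
  have hX : X ∈ Submodule.span ℂ (Set.range A) := hA.span_eq_top ▸ Submodule.mem_top
  obtain ⟨c, rfl⟩ := (Submodule.mem_span_range_iff_exists_fun ℂ).mp hX
  have hc : ∀ k, trace ((A k)ᴴ * ∑ l, c l • A l) = c k := fun k => by
    simp [Matrix.mul_sum, trace_sum, hA.orthonormal]
  simp_rw [hc]

lemma sum_norm_sq_trace (hA : IsHSOrthonormalBasis A) (Y : Matrix n n ℂ) :
    ∑ k, ‖trace ((A k)ᴴ * Y)‖ ^ 2 = (trace (Yᴴ * Y)).re := by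
  nth_rewrite 2 [← hA.sum_trace_mul_smul Y]
  rw [conjTranspose_sum, Finset.sum_mul, trace_sum, Complex.re_sum]
  refine Finset.sum_congr rfl fun k _ => ?_
  rw [conjTranspose_smul, smul_mul_assoc, trace_smul, smul_eq_mul, Complex.star_def,
    Complex.conj_mul']
  norm_cast

lemma exists_eq_trace_conjTranspose_mul (hA : IsHSOrthonormalBasis A)
    (φ : Matrix n n ℂ →ₗ[ℂ] ℂ) : ∃ Y : Matrix n n ℂ, ∀ X, φ X = trace (Yᴴ * X) := by
  refine ⟨∑ m, star (φ (A m)) • A m, fun X => ?_⟩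
  conv_lhs => rw [← hA.sum_trace_mul_smul X]
  simp [conjTranspose_sum, Finset.sum_mul, trace_sum, mul_comm]

lemma sum_norm_sq_trace_eq (hA : IsHSOrthonormalBasis A) (hB : IsHSOrthonormalBasis B)
    (Y : Matrix n n ℂ) (s : Finset ι) (hs : ∀ k ∉ s, B k = A k) :
    ∑ k ∈ s, ‖trace ((B k)ᴴ * Y)‖ ^ 2 = ∑ k ∈ s, ‖trace ((A k)ᴴ * Y)‖ ^ 2 :=
  s.sum_eq_sum_of_sum_univ_eq (by rw [hA.sum_norm_sq_trace, hB.sum_norm_sq_trace])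
    fun k hk => by rw [hs k hk]

lemma sum_norm_sq_map_eq (hA : IsHSOrthonormalBasis A) (hB : IsHSOrthonormalBasis B)
    (φ : Matrix n n ℂ →ₗ[ℂ] ℂ) (s : Finset ι) (hs : ∀ l ∉ s, B l = A l) :
    ∑ l ∈ s, ‖φ (B l)‖ ^ 2 = ∑ l ∈ s, ‖φ (A l)‖ ^ 2 := by
  obtain ⟨Y, hY⟩ := hA.exists_eq_trace_conjTranspose_mul φ
  have hnorm : ∀ X, ‖φ X‖ = ‖trace (Xᴴ * Y)‖ := fun X => by
    rw [hY, ← norm_star, ← trace_conjTranspose, conjTranspose_mul, conjTranspose_conjTranspose]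
  simp_rw [hnorm]
  exact hA.sum_norm_sq_trace_eq hB Y s hs

lemma sum_sum_norm_sq_trace_mul_map_eq {A' : ι → Matrix n n ℂ} (hA : IsHSOrthonormalBasis A)
    (hA' : IsHSOrthonormalBasis A') (hB : IsHSOrthonormalBasis B)
    (E : Matrix n n ℂ →ₗ[ℂ] Matrix n n ℂ) (s t : Finset ι) (hs : ∀ k ∉ s, A' k = A k)
    (ht : ∀ l ∉ t, B l = A l) :
    ∑ k ∈ s, ∑ l ∈ t, ‖trace ((A' k)ᴴ * E (B l))‖ ^ 2
      = ∑ k ∈ s, ∑ l ∈ t, ‖trace ((A k)ᴴ * E (A l))‖ ^ 2 := by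
  calc ∑ k ∈ s, ∑ l ∈ t, ‖trace ((A' k)ᴴ * E (B l))‖ ^ 2
      = ∑ k ∈ s, ∑ l ∈ t, ‖trace ((A' k)ᴴ * E (A l))‖ ^ 2 :=
        Finset.sum_congr rfl fun k _ => hA.sum_norm_sq_map_eq hB
          (traceLinearMap n ℂ ℂ ∘ₗ LinearMap.mulLeft ℂ (A' k)ᴴ ∘ₗ E) t ht
    _ = ∑ l ∈ t, ∑ k ∈ s, ‖trace ((A' k)ᴴ * E (A l))‖ ^ 2 := Finset.sum_comm
    _ = ∑ l ∈ t, ∑ k ∈ s, ‖trace ((A k)ᴴ * E (A l))‖ ^ 2 :=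
        Finset.sum_congr rfl fun l _ => hA.sum_norm_sq_trace_eq hA' (E (A l)) s hs
    _ = _ := Finset.sum_comm

end IsHSOrthonormalBasis

end HilbertSchmidt

theorem statement_11_general (d : ℕ)
    (A : Fin (d ^ 2) → Mat d)
    (horth : ∀ k l : Fin (d ^ 2), Matrix.trace ((A k)ᴴ * A l) = if k = l then 1 else 0)
    (hspan : Submodule.span ℂ (Set.range A) = ⊤)
    (hA0 : ∀ k : Fin (d ^ 2), (k : ℕ) = 0 → A k = ((Real.sqrt d : ℝ) : ℂ)⁻¹ • 1)
    (E : Mat d →ₗ[ℂ] Mat d) (U V : Mat d)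
    (hU : U ∈ Matrix.unitaryGroup (Fin d) ℂ) (hV : V ∈ Matrix.unitaryGroup (Fin d) ℂ) :
    unitarity A (conjMap V ∘ₗ E ∘ₗ conjMap U) = unitarity A E := by
  have hA : IsHSOrthonormalBasis A := ⟨horth, hspan⟩
  set s := Finset.univ.filter fun k : Fin (d ^ 2) => (k : ℕ) ≠ 0
  have hfix : ∀ W ∈ unitaryGroup (Fin d) ℂ, ∀ k ∉ s, W * A k * Wᴴ = A k := fun W hW k hk => by
    rw [hA0 k (by simpa [s] using hk), conj_smul_one hW]
  have hLiou : ∀ k l, Liou A (conjMap V ∘ₗ E ∘ₗ conjMap U) k l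
      = trace ((Vᴴ * A k * Vᴴᴴ)ᴴ * E (U * A l * Uᴴ)) := fun k l => by
    simp only [Liou, conjMap, of_apply, LinearMap.comp_apply, LinearMap.mulLeft_apply,
      LinearMap.mulRight_apply, conjTranspose_mul, conjTranspose_conjTranspose, Matrix.mul_assoc]
    rw [trace_mul_comm Vᴴ]
    simp only [Matrix.mul_assoc]
  have hV' : Vᴴ ∈ unitaryGroup (Fin d) ℂ := Unitary.star_mem hV
  unfold unitarity
  simp_rw [hLiou]
  congr 1
  exact hA.sum_sum_norm_sq_trace_mul_map_eq (hA.conj hV') (hA.conj hU) E s s (hfix _ hV')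
    (hfix _ hU)

/-- The unitarity is invariant under pre- and post-composition with
unitary conjugations: `u(𝓥 ∘ E ∘ 𝓤) = u(E)`. -/
theorem statement_11 (d : ℕ) (hd : 2 ≤ d)
    (A : Fin (d ^ 2) → Mat d)
    (horth : ∀ k l : Fin (d ^ 2), Matrix.trace ((A k)ᴴ * A l) = if k = l then 1 else 0)
    (hspan : Submodule.span ℂ (Set.range A) = ⊤)
    (hA0 : ∀ k : Fin (d ^ 2), (k : ℕ) = 0 → A k = ((Real.sqrt d : ℝ) : ℂ)⁻¹ • 1)
    (E : Mat d →ₗ[ℂ] Mat d) (U V : Mat d)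
    (hU : U ∈ Matrix.unitaryGroup (Fin d) ℂ) (hV : V ∈ Matrix.unitaryGroup (Fin d) ℂ) :
    unitarity A (conjMap V ∘ₗ E ∘ₗ conjMap U) = unitarity A E :=
  statement_11_general d A horth hspan hA0 E U V hU hV
end

section
/- Let E : M_d(ℂ) → M_d(ℂ) be completely positive and trace-preserving. Then u(E) ≤ 1, with equality if and only if E is a unitary channel, i.e., there exists a unitary U ∈ U(d) such that E(ρ) = UρU† for all ρ. -/
open Matrix Kronecker ComplexOrder MeasureTheory

variable {d : ℕ}

/-!
The Liouville matrix of `E` and its Choi matrix `C` are the same operator written in two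
orthonormal bases, so they have the same Frobenius norm. Trace preservation makes the first row of
the Liouville matrix `(1, 0, …, 0)`, hence `(d² - 1) u(E) = ‖C‖² - 1 - ‖𝓔ₙ‖²`. As `C ≥ 0` with
`Tr C = d`, `‖C‖² = ∑ λᵢ² ≤ (∑ λᵢ)² = d²`, so `u(E) ≤ 1`. Equality forces `‖C‖² = d²`, i.e. `C`
has rank one, `C = vec K (vec K)†`; then `E ρ = K ρ K†`, and trace preservation makes `K` unitary.
Conversely a unitary channel has a rank-one Choi matrix and is unital, so `𝓔ₙ = 0`.
-/

namespace Matrix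

variable {ι m n : Type*} [Fintype ι] [Fintype m] [Fintype n]

lemma re_trace_conjTranspose_mul_self (X : Matrix m n ℂ) :
    (trace (Xᴴ * X)).re = ∑ i, ∑ j, ‖X i j‖ ^ 2 := by
  simp only [trace, diag, mul_apply, conjTranspose_apply, Complex.re_sum, Complex.star_def,
    ← Complex.normSq_eq_conj_mul_self, Complex.ofReal_re, Complex.normSq_eq_norm_sq]
  exact Finset.sum_comm

section Orthonormal

variable [DecidableEq ι] {A : ι → Matrix n n ℂ}

lemma sum_trace_conjTranspose_mul_smul_of_orthonormal
    (horth : ∀ k l, trace ((A k)ᴴ * A l) = if k = l then 1 else 0)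
    (hspan : Submodule.span ℂ (Set.range A) = ⊤) (X : Matrix n n ℂ) :
    ∑ k, trace ((A k)ᴴ * X) • A k = X := by
  have hX : X ∈ Submodule.span ℂ (Set.range A) := hspan ▸ Submodule.mem_top
  induction hX using Submodule.span_induction with
  | mem x hx =>
    obtain ⟨l, rfl⟩ := hx
    simp [horth, ite_smul]
  | zero => simp
  | add x y _ _ hx hy =>
    simp only [Matrix.mul_add, trace_add, add_smul, Finset.sum_add_distrib, hx, hy]
  | smul c x _ hx =>
    simp only [Matrix.mul_smul, trace_smul, smul_eq_mul, mul_smul, ← Finset.smul_sum, hx]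

lemma sum_norm_trace_conjTranspose_mul_sq_of_orthonormal
    (horth : ∀ k l, trace ((A k)ᴴ * A l) = if k = l then 1 else 0)
    (hspan : Submodule.span ℂ (Set.range A) = ⊤) (X : Matrix n n ℂ) :
    ∑ k, ‖trace ((A k)ᴴ * X)‖ ^ 2 = ∑ i, ∑ j, ‖X i j‖ ^ 2 := by
  have hconj : ∀ k, trace (Xᴴ * A k) = star (trace ((A k)ᴴ * X)) := fun k => by
    rw [← trace_conjTranspose, conjTranspose_mul, conjTranspose_conjTranspose]
  calc ∑ k, ‖trace ((A k)ᴴ * X)‖ ^ 2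
      = (∑ k, trace ((A k)ᴴ * X) * star (trace ((A k)ᴴ * X))).re := by
        simp [Complex.re_sum, Complex.mul_conj, Complex.normSq_eq_norm_sq, -Complex.ofReal_pow]
    _ = (trace (Xᴴ * ∑ k, trace ((A k)ᴴ * X) • A k)).re := by
        simp [Matrix.mul_sum, trace_sum, hconj]
    _ = ∑ i, ∑ j, ‖X i j‖ ^ 2 := by
        rw [sum_trace_conjTranspose_mul_smul_of_orthonormal horth hspan,
          re_trace_conjTranspose_mul_self]

end Orthonormal

end Matrix

lemma Finset.mul_eq_zero_of_sum_sq_eq_sq_sum {ι : Type*} {s : Finset ι} {f : ι → ℝ}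
    (hf : ∀ i ∈ s, 0 ≤ f i) (h : ∑ i ∈ s, f i ^ 2 = (∑ i ∈ s, f i) ^ 2)
    {i j : ι} (hi : i ∈ s) (hj : j ∈ s) (hij : i ≠ j) : f i * f j = 0 := by
  classical
  have hle : ∀ k ∈ s, f k * f k ≤ f k * ∑ l ∈ s, f l := fun k hk =>
    mul_le_mul_of_nonneg_left (Finset.single_le_sum hf hk) (hf k hk)
  have heq : ∑ k ∈ s, f k * f k = ∑ k ∈ s, f k * ∑ l ∈ s, f l := by
    simpa only [sq, Finset.sum_mul] using h
  have hii : f i * f i = f i * ∑ l ∈ s, f l := (Finset.sum_eq_sum_iff_of_le hle).mp heq i hi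
  have hrest : f i * ∑ l ∈ s.erase i, f l = 0 := by
    rw [← Finset.add_sum_erase s f hi, mul_add] at hii
    linarith
  have hj' : f j ≤ ∑ l ∈ s.erase i, f l :=
    Finset.single_le_sum (fun l hl => hf l (Finset.mem_of_mem_erase hl))
      (Finset.mem_erase.mpr ⟨hij.symm, hj⟩)
  have := mul_le_mul_of_nonneg_left hj' (hf i hi)
  nlinarith [mul_nonneg (hf i hi) (hf j hj)]

namespace Matrix

variable {n : Type*} [Fintype n]

lemma sum_norm_vecMulVec_sq (w : n → ℂ) :
    ∑ p, ∑ q, ‖vecMulVec w (star w) p q‖ ^ 2 = (trace (vecMulVec w (star w))).re ^ 2 := by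
  have htrace : (trace (vecMulVec w (star w))).re = ∑ p, ‖w p‖ ^ 2 := by
    simp [trace, vecMulVec_apply, Complex.re_sum, Complex.mul_conj, Complex.normSq_eq_norm_sq,
      -Complex.ofReal_pow]
  rw [htrace, sq (∑ p, _), Finset.sum_mul_sum]
  simp [vecMulVec_apply, mul_pow]

namespace IsHermitian

variable [DecidableEq n] {C : Matrix n n ℂ}

lemma apply_eq_sum_eigenvalues (hC : C.IsHermitian) (p q : n) :
    C p q = ∑ i, (hC.eigenvalues i : ℂ) * hC.eigenvectorUnitary p i *
      star (hC.eigenvectorUnitary q i) := by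
  conv_lhs => rw [hC.spectral_theorem]
  simp [mul_apply, diagonal_apply, mul_comm]

lemma sum_norm_sq_eq_sum_eigenvalues_sq (hC : C.IsHermitian) :
    ∑ p, ∑ q, ‖C p q‖ ^ 2 = ∑ i, hC.eigenvalues i ^ 2 := by
  set U : Matrix n n ℂ := (hC.eigenvectorUnitary : Matrix n n ℂ)
  set D : Matrix n n ℂ := diagonal (RCLike.ofReal ∘ hC.eigenvalues) with hD
  have hU : star U * U = 1 := Unitary.coe_star_mul_self hC.eigenvectorUnitary
  have hspec : C = U * D * star U := hC.spectral_theorem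
  have hsq : Cᴴ * C = U * (D * D) * star U := by
    rw [hC.eq, hspec]
    calc U * D * star U * (U * D * star U) = U * (D * (star U * U) * D) * star U := by
          simp only [Matrix.mul_assoc]
      _ = U * (D * D) * star U := by rw [hU, Matrix.mul_one]
  rw [← re_trace_conjTranspose_mul_self, hsq, trace_mul_cycle, hU, Matrix.one_mul, hD,
    diagonal_mul_diagonal, trace_diagonal]
  simp [sq, -Complex.ofReal_pow]

lemma re_trace_eq_sum_eigenvalues (hC : C.IsHermitian) : (trace C).re = ∑ i, hC.eigenvalues i := by
  simp [hC.trace_eq_sum_eigenvalues, Complex.re_sum]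

end IsHermitian

namespace PosSemidef

variable [DecidableEq n] {C : Matrix n n ℂ}

lemma sum_norm_sq_le_re_trace_sq (hC : C.PosSemidef) :
    ∑ p, ∑ q, ‖C p q‖ ^ 2 ≤ (trace C).re ^ 2 := by
  rw [hC.1.sum_norm_sq_eq_sum_eigenvalues_sq, hC.1.re_trace_eq_sum_eigenvalues]
  exact Finset.sum_sq_le_sq_sum_of_nonneg fun i _ => hC.eigenvalues_nonneg i

lemma exists_eq_vecMulVec_of_sum_norm_sq_eq (hC : C.PosSemidef)
    (h : ∑ p, ∑ q, ‖C p q‖ ^ 2 = (trace C).re ^ 2) : ∃ w : n → ℂ, C = vecMulVec w (star w) := by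
  set U : Matrix n n ℂ := (hC.1.eigenvectorUnitary : Matrix n n ℂ)
  set s : n → ℝ := fun i => √(hC.1.eigenvalues i) with hs
  rw [hC.1.sum_norm_sq_eq_sum_eigenvalues_sq, hC.1.re_trace_eq_sum_eigenvalues] at h
  have hcross : ∀ i j, i ≠ j → s i * s j = 0 := fun i j hij => by
    rw [hs, ← Real.sqrt_mul (hC.eigenvalues_nonneg i),
      Finset.mul_eq_zero_of_sum_sq_eq_sq_sum (fun k _ => hC.eigenvalues_nonneg k) h
        (Finset.mem_univ i) (Finset.mem_univ j) hij, Real.sqrt_zero]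
  refine ⟨fun p => ∑ i, (s i : ℂ) * U p i, ?_⟩
  ext p q
  rw [hC.1.apply_eq_sum_eigenvalues, vecMulVec_apply, Pi.star_apply, star_sum, Finset.sum_mul_sum]
  refine Finset.sum_congr rfl fun i _ => ?_
  rw [Finset.sum_eq_single i]
  · have hsq : ((s i : ℂ)) * (s i : ℂ) = hC.1.eigenvalues i := by
      rw [← Complex.ofReal_mul, Real.mul_self_sqrt (hC.eigenvalues_nonneg i)]
    simp only [star_mul', Complex.star_def, Complex.conj_ofReal, ← hsq]
    ring
  · intro j _ hji
    have hsq : ((s i : ℂ)) * (s j : ℂ) = 0 := by exact_mod_cast hcross i j hji.symm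
    simp only [star_mul', Complex.star_def, Complex.conj_ofReal]
    linear_combination (U p i * (starRingEnd ℂ) (U q j)) * hsq
  · simp

end PosSemidef

end Matrix

section Choi

variable {E : Mat d →ₗ[ℂ] Mat d}

lemma apply_eq_sum_choi (X : Mat d) (a b : Fin d) :
    E X a b = ∑ i, ∑ j, X i j * choi E (a, i) (b, j) := by
  conv_lhs => rw [matrix_eq_sum_single X]
  simp only [map_sum, Matrix.sum_apply]
  refine Finset.sum_congr rfl fun i _ => Finset.sum_congr rfl fun j _ => ?_
  rw [show single i j (X i j) = X i j • single i j 1 by rw [smul_single, smul_eq_mul, mul_one],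
    map_smul, Matrix.smul_apply, smul_eq_mul]
  rfl

lemma trace_choi_of_isTP (hTP : IsTP E) : trace (choi E) = d := by
  have hdiag : ∀ i : Fin d, ∑ a, choi E (a, i) (a, i) = 1 := fun i => by
    simpa [choi, trace] using hTP (single i i 1)
  simp only [trace, diag, Fintype.sum_prod_type]
  rw [Finset.sum_comm]
  simp [hdiag]

lemma sum_norm_Liou_sq {A : Fin (d ^ 2) → Mat d}
    (horth : ∀ k l, trace ((A k)ᴴ * A l) = if k = l then 1 else 0)
    (hspan : Submodule.span ℂ (Set.range A) = ⊤) :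
    ∑ k, ∑ l, ‖Liou A E k l‖ ^ 2 = ∑ p, ∑ q, ‖choi E p q‖ ^ 2 := by
  -- `E X a b` is the Hilbert–Schmidt pairing of `X` with a slice `G a b` of the Choi matrix
  set G : Fin d → Fin d → Mat d := fun a b => of fun i j => star (choi E (a, i) (b, j))
  have hentry : ∀ X a b, ‖E X a b‖ = ‖trace (Xᴴ * G a b)‖ := fun X a b => by
    rw [← norm_star (trace _), ← trace_conjTranspose, conjTranspose_mul,
      conjTranspose_conjTranspose, apply_eq_sum_choi, trace, Finset.sum_comm]
    simp [G, mul_apply, mul_comm]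
  calc ∑ k, ∑ l, ‖Liou A E k l‖ ^ 2
      = ∑ l, ∑ a, ∑ b, ‖E (A l) a b‖ ^ 2 := by
        rw [Finset.sum_comm]
        exact Finset.sum_congr rfl fun l _ =>
          sum_norm_trace_conjTranspose_mul_sq_of_orthonormal horth hspan (E (A l))
    _ = ∑ a, ∑ b, ∑ i, ∑ j, ‖choi E (a, i) (b, j)‖ ^ 2 := by
        simp only [hentry]
        rw [Finset.sum_comm]
        refine Finset.sum_congr rfl fun a _ => Finset.sum_comm.trans ?_
        refine Finset.sum_congr rfl fun b _ => ?_
        rw [sum_norm_trace_conjTranspose_mul_sq_of_orthonormal horth hspan]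
        simp [G]
    _ = ∑ p, ∑ q, ‖choi E p q‖ ^ 2 := by
        simp only [Fintype.sum_prod_type]
        exact Finset.sum_congr rfl fun a _ => Finset.sum_comm

lemma forall_eq_conj_iff_choi_eq (K : Mat d) :
    (∀ X, E X = K * X * Kᴴ) ↔
      choi E = vecMulVec (fun p => K p.1 p.2) (star fun p => K p.1 p.2) := by
  constructor
  · intro hE
    ext ⟨a, i⟩ ⟨b, j⟩
    simp [choi, hE, vecMulVec_apply, mul_apply, single_apply, ite_and]
  · intro hchoi X
    ext a b
    rw [apply_eq_sum_choi, hchoi]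
    simp only [vecMulVec_apply, mul_apply, conjTranspose_apply, Finset.sum_mul, Pi.star_apply]
    rw [Finset.sum_comm]
    exact Finset.sum_congr rfl fun j _ => Finset.sum_congr rfl fun i _ => by ring

lemma conjTranspose_mul_self_eq_one_of_isTP {K : Mat d} (hE : ∀ X, E X = K * X * Kᴴ)
    (hTP : IsTP E) : Kᴴ * K = 1 :=
  ext_iff_trace_mul_right.mpr fun X => by
    rw [Matrix.one_mul, ← hTP X, hE, trace_mul_cycle K X Kᴴ]

end Choi

section Liouville

variable {A : Fin (d ^ 2) → Mat d} {E : Mat d →ₗ[ℂ] Mat d}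

lemma Liou_apply_of_isTP (hTP : IsTP E) {c : ℂ} {k : Fin (d ^ 2)} (hk : A k = c • 1)
    (l : Fin (d ^ 2)) : Liou A E k l = trace ((A k)ᴴ * A l) := by
  simp [Liou, hk, hTP (A l)]

lemma Liou_apply_of_map_eq {l : Fin (d ^ 2)} (hl : E (A l) = A l) (k : Fin (d ^ 2)) :
    Liou A E k l = trace ((A k)ᴴ * A l) := by
  simp [Liou, hl]

lemma sum_norm_Liou_sq_eq_of_isTP (hd : 2 ≤ d)
    (horth : ∀ k l, trace ((A k)ᴴ * A l) = if k = l then 1 else 0) {c : ℂ}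
    (hA0 : ∀ k : Fin (d ^ 2), (k : ℕ) = 0 → A k = c • 1) (hTP : IsTP E) :
    ∑ k, ∑ l, ‖Liou A E k l‖ ^ 2 = 1 + nSq A E + ((d : ℝ) ^ 2 - 1) * unitarity A E := by
  have hden : (d : ℝ) ^ 2 - 1 ≠ 0 := by
    have : (2 : ℝ) ≤ d := by exact_mod_cast hd
    nlinarith
  have hzero : Finset.univ.filter (fun k : Fin (d ^ 2) => (k : ℕ) = 0) = {⟨0, by positivity⟩} := by
    ext k
    simp [Fin.ext_iff]
  have hrow : ∀ k : Fin (d ^ 2), (k : ℕ) = 0 → ∑ l, ‖Liou A E k l‖ ^ 2 = 1 := fun k hk => by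
    simp [Liou_apply_of_isTP hTP (hA0 k hk), horth, apply_ite]
  rw [unitarity, mul_div_cancel₀ _ hden, nSq,
    ← Finset.sum_filter_add_sum_filter_not _ (fun k : Fin (d ^ 2) => (k : ℕ) = 0),
    Finset.sum_congr rfl fun k hk => hrow k (Finset.mem_filter.mp hk).2, hzero]
  rw [Finset.sum_singleton, add_assoc, ← Finset.sum_add_distrib]
  congr 1
  exact Finset.sum_congr rfl fun k _ => by
    rw [← hzero, Finset.sum_filter_add_sum_filter_not]

lemma nSq_nonneg : 0 ≤ nSq A E := by
  unfold nSq
  positivity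

lemma nSq_eq_zero_of_map_one (horth : ∀ k l, trace ((A k)ᴴ * A l) = if k = l then 1 else 0)
    {c : ℂ} (hA0 : ∀ k : Fin (d ^ 2), (k : ℕ) = 0 → A k = c • 1) (hE : E 1 = 1) :
    nSq A E = 0 := by
  refine Finset.sum_eq_zero fun k hk => Finset.sum_eq_zero fun l hl => ?_
  have hkl : k ≠ l := fun h => (Finset.mem_filter.mp hk).2 (h ▸ (Finset.mem_filter.mp hl).2)
  have hfix : E (A l) = A l := by rw [hA0 l (Finset.mem_filter.mp hl).2, map_smul, hE]
  simp [Liou_apply_of_map_eq hfix, horth, hkl]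

end Liouville

section UnitaryChannel

variable {E : Mat d →ₗ[ℂ] Mat d}

lemma sum_norm_choi_sq_of_eq_conj (hTP : IsTP E) {U : Mat d} (hE : ∀ X, E X = U * X * Uᴴ) :
    ∑ p, ∑ q, ‖choi E p q‖ ^ 2 = (d : ℝ) ^ 2 := by
  have hchoi := (forall_eq_conj_iff_choi_eq U).mp hE
  have htrace := trace_choi_of_isTP hTP
  rw [hchoi] at htrace ⊢
  rw [sum_norm_vecMulVec_sq, htrace, Complex.natCast_re]

lemma exists_unitary_of_sum_norm_choi_sq_eq (hCP : IsCP E) (hTP : IsTP E)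
    (h : ∑ p, ∑ q, ‖choi E p q‖ ^ 2 = (d : ℝ) ^ 2) :
    ∃ U ∈ unitaryGroup (Fin d) ℂ, ∀ X, E X = U * X * Uᴴ := by
  obtain ⟨w, hw⟩ := PosSemidef.exists_eq_vecMulVec_of_sum_norm_sq_eq hCP
    (by rw [h, trace_choi_of_isTP hTP, Complex.natCast_re])
  have hE := (forall_eq_conj_iff_choi_eq (of fun a i => w (a, i))).mpr hw
  exact ⟨_, mem_unitaryGroup_iff'.mpr (conjTranspose_mul_self_eq_one_of_isTP hE hTP), hE⟩

end UnitaryChannel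

/-- For CPTP `E`, `u(E) ≤ 1`, with equality iff `E` is a unitary
channel `ρ ↦ UρU†`. -/
theorem statement_12 (d : ℕ) (hd : 2 ≤ d)
    (A : Fin (d ^ 2) → Mat d)
    (horth : ∀ k l : Fin (d ^ 2), Matrix.trace ((A k)ᴴ * A l) = if k = l then 1 else 0)
    (hspan : Submodule.span ℂ (Set.range A) = ⊤)
    (hA0 : ∀ k : Fin (d ^ 2), (k : ℕ) = 0 → A k = ((Real.sqrt d : ℝ) : ℂ)⁻¹ • 1)
    (E : Mat d →ₗ[ℂ] Mat d) (hCP : IsCP E) (hTP : IsTP E) :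
    unitarity A E ≤ 1 ∧
      (unitarity A E = 1 ↔
        ∃ U ∈ Matrix.unitaryGroup (Fin d) ℂ, ∀ ρ : Mat d, E ρ = U * ρ * Uᴴ) := by
  have hden : (0 : ℝ) < (d : ℝ) ^ 2 - 1 := by
    have : (2 : ℝ) ≤ d := by exact_mod_cast hd
    nlinarith
  have hsplit := sum_norm_Liou_sq_eq_of_isTP hd horth hA0 hTP
  rw [sum_norm_Liou_sq horth hspan] at hsplit
  have hle : ∑ p, ∑ q, ‖choi E p q‖ ^ 2 ≤ (d : ℝ) ^ 2 := by
    simpa [trace_choi_of_isTP hTP] using Matrix.PosSemidef.sum_norm_sq_le_re_trace_sq hCP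
  have hn : 0 ≤ nSq A E := nSq_nonneg
  refine ⟨by nlinarith, fun hu => exists_unitary_of_sum_norm_choi_sq_eq hCP hTP ?_, ?_⟩
  · rw [hu] at hsplit
    linarith
  · rintro ⟨U, hU, hEU⟩
    have hunital : E 1 = 1 := by rw [hEU, Matrix.mul_one]; exact Matrix.mem_unitaryGroup_iff.mp hU
    rw [sum_norm_choi_sq_of_eq_conj hTP hEU, nSq_eq_zero_of_map_one horth hA0 hunital] at hsplit
    nlinarith
end

section
/- Let E, F : M_d(ℂ) → M_d(ℂ) be trace-preserving linear maps such that the largest singular value of the unital block 𝓔_u is at most 1 (equivalently, the operator norm ‖𝓔_u‖_op ≤ 1). Then the unitarity is monotone under post-composition by E: u(E ∘ F) ≤ u(F). -/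
open Matrix Kronecker ComplexOrder MeasureTheory

variable {d : ℕ}

/-!
Trace preservation of `F` makes the first row of its Liouville matrix vanish off the
diagonal, so the unital block of `E ∘ F` is the product `𝓔ᵤ 𝓕ᵤ`. Each column of `𝓕ᵤ` is
therefore mapped by the contraction `𝓔ᵤ` onto the corresponding column of `(E ∘ F)ᵤ`, so the
latter is no longer; summing the squared column norms compares the two unitarities.
-/

theorem Matrix.sum_trace_conjTranspose_mul_smul_eq {n ι : Type*} [Fintype n] [Fintype ι]
    [DecidableEq ι] (A : ι → Matrix n n ℂ)
    (horth : ∀ k l, trace ((A k)ᴴ * A l) = if k = l then 1 else 0)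
    (hspan : Submodule.span ℂ (Set.range A) = ⊤) (X : Matrix n n ℂ) :
    ∑ m, trace ((A m)ᴴ * X) • A m = X := by
  have hX : X ∈ Submodule.span ℂ (Set.range A) := hspan ▸ Submodule.mem_top
  induction hX using Submodule.span_induction with
  | mem x hx =>
      obtain ⟨l, rfl⟩ := hx
      simp [horth, ite_smul]
  | zero => simp
  | add x y _ _ ihx ihy =>
      simp only [mul_add, trace_add, add_smul, Finset.sum_add_distrib, ihx, ihy]
  | smul c x _ ih =>
      simp only [mul_smul_comm, trace_smul, smul_eq_mul, ← smul_smul, ← Finset.smul_sum, ih]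

section Liouville

variable (A : Fin (d ^ 2) → Mat d)

theorem Liou_comp
    (horth : ∀ k l : Fin (d ^ 2), trace ((A k)ᴴ * A l) = if k = l then 1 else 0)
    (hspan : Submodule.span ℂ (Set.range A) = ⊤) (E F : Mat d →ₗ[ℂ] Mat d) :
    Liou A (E ∘ₗ F) = Liou A E * Liou A F := by
  ext k l
  simp only [Liou, of_apply, mul_apply, LinearMap.comp_apply]
  conv_lhs => rw [← Matrix.sum_trace_conjTranspose_mul_smul_eq A horth hspan (F (A l))]
  simp only [map_sum, map_smul, Finset.mul_sum, mul_smul_comm, trace_sum, trace_smul,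
    smul_eq_mul, mul_comm]

theorem Liou_eq_zero_of_isTP
    (horth : ∀ k l : Fin (d ^ 2), trace ((A k)ᴴ * A l) = if k = l then 1 else 0)
    (hA0 : ∀ k : Fin (d ^ 2), (k : ℕ) = 0 → A k = ((Real.sqrt d : ℝ) : ℂ)⁻¹ • 1)
    {F : Mat d →ₗ[ℂ] Mat d} (hF : IsTP F) {m l : Fin (d ^ 2)} (hm : (m : ℕ) = 0)
    (hl : (l : ℕ) ≠ 0) :
    Liou A F m l = 0 := by
  have hml : m ≠ l := fun h => hl (h ▸ hm)
  calc Liou A F m l = trace ((A m)ᴴ * A l) := by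
        simp only [Liou, of_apply, hA0 m hm, conjTranspose_smul, conjTranspose_one,
          smul_mul, one_mul, trace_smul, hF (A l)]
    _ = 0 := by rw [horth, if_neg hml]

theorem Liou_comp_of_isTP
    (horth : ∀ k l : Fin (d ^ 2), trace ((A k)ᴴ * A l) = if k = l then 1 else 0)
    (hspan : Submodule.span ℂ (Set.range A) = ⊤)
    (hA0 : ∀ k : Fin (d ^ 2), (k : ℕ) = 0 → A k = ((Real.sqrt d : ℝ) : ℂ)⁻¹ • 1)
    (E : Mat d →ₗ[ℂ] Mat d) {F : Mat d →ₗ[ℂ] Mat d} (hF : IsTP F) (k : Fin (d ^ 2))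
    {l : Fin (d ^ 2)} (hl : (l : ℕ) ≠ 0) :
    Liou A (E ∘ₗ F) k l = ∑ m ∈ Finset.univ.filter (fun m : Fin (d ^ 2) => (m : ℕ) ≠ 0),
      Liou A E k m * Liou A F m l := by
  rw [Liou_comp A horth hspan, mul_apply, Finset.sum_filter]
  refine Finset.sum_congr rfl fun m _ => ?_
  split_ifs with hm
  · rfl
  · rw [Liou_eq_zero_of_isTP A horth hA0 hF (not_not.mp hm) hl, mul_zero]

end Liouville

theorem statement_18_general (d : ℕ) (hd : 2 ≤ d)
    (A : Fin (d ^ 2) → Mat d)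
    (horth : ∀ k l : Fin (d ^ 2), Matrix.trace ((A k)ᴴ * A l) = if k = l then 1 else 0)
    (hspan : Submodule.span ℂ (Set.range A) = ⊤)
    (hA0 : ∀ k : Fin (d ^ 2), (k : ℕ) = 0 → A k = ((Real.sqrt d : ℝ) : ℂ)⁻¹ • 1)
    (E F : Mat d →ₗ[ℂ] Mat d) (hFTP : IsTP F)
    (hop : ∀ x : Fin (d ^ 2) → ℂ,
      ∑ k ∈ Finset.univ.filter (fun k : Fin (d ^ 2) => (k : ℕ) ≠ 0),
        ‖∑ l ∈ Finset.univ.filter (fun l : Fin (d ^ 2) => (l : ℕ) ≠ 0),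
            Liou A E k l * x l‖ ^ 2
        ≤ ∑ l ∈ Finset.univ.filter (fun l : Fin (d ^ 2) => (l : ℕ) ≠ 0), ‖x l‖ ^ 2) :
    unitarity A (E ∘ₗ F) ≤ unitarity A F := by
  have hden : (0 : ℝ) ≤ (d : ℝ) ^ 2 - 1 := by
    have : (2 : ℝ) ≤ d := by exact_mod_cast hd
    nlinarith
  refine div_le_div_of_nonneg_right ?_ hden
  rw [Finset.sum_comm, Finset.sum_comm (f := fun k l => ‖Liou A F k l‖ ^ 2)]
  refine Finset.sum_le_sum fun l hl => ?_
  have hl0 : (l : ℕ) ≠ 0 := (Finset.mem_filter.mp hl).2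
  simpa only [Liou_comp_of_isTP A horth hspan hA0 E hFTP _ hl0] using
    hop fun m => Liou A F m l

/-- If `E, F` are trace-preserving and every singular value of the
unital block `𝓔ᵤ` is at most 1 (i.e. `‖𝓔ᵤ x‖ ≤ ‖x‖` for all vectors `x` supported on the
unital coordinates), then `u(E ∘ F) ≤ u(F)`. -/
theorem statement_18 (d : ℕ) (hd : 2 ≤ d)
    (A : Fin (d ^ 2) → Mat d)
    (horth : ∀ k l : Fin (d ^ 2), Matrix.trace ((A k)ᴴ * A l) = if k = l then 1 else 0)
    (hspan : Submodule.span ℂ (Set.range A) = ⊤)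
    (hA0 : ∀ k : Fin (d ^ 2), (k : ℕ) = 0 → A k = ((Real.sqrt d : ℝ) : ℂ)⁻¹ • 1)
    (E F : Mat d →ₗ[ℂ] Mat d) (hETP : IsTP E) (hFTP : IsTP F)
    (hop : ∀ x : Fin (d ^ 2) → ℂ,
      ∑ k ∈ Finset.univ.filter (fun k : Fin (d ^ 2) => (k : ℕ) ≠ 0),
        ‖∑ l ∈ Finset.univ.filter (fun l : Fin (d ^ 2) => (l : ℕ) ≠ 0),
            Liou A E k l * x l‖ ^ 2
        ≤ ∑ l ∈ Finset.univ.filter (fun l : Fin (d ^ 2) => (l : ℕ) ≠ 0), ‖x l‖ ^ 2) :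
    unitarity A (E ∘ₗ F) ≤ unitarity A F :=
  statement_18_general d hd A horth hspan hA0 E F hFTP hop
end
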